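/- Let Δ be a full-dimensional reflexive Delzant polytope in t*, let F be a facet of Δ supported on the hyperplane {w ∈ t* | ⟨w, ν⟩ = -1} with primitive inward normal ν ∈ ℓ, let v be a vertex of Δ lying in F, and let α_1, …, α_d ∈ ℓ* be the weights of v ordered so that F ⊂ v + R_{≥0}⟨α_1,…,α_{d-1}⟩. Then ⟨α_d, ν⟩ = 1. Moreover, if e is the edge of Δ incident to v not contained in F, then there exists a positive integer t_max such that e = {v + t α_d | 0 ≤ t ≤ t_max}. -/

import Mathlib

open Set

noncomputable section

variable {E : Type*} [NormedAddCommGroup E] [InnerProductSpace ℝ E]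

/-- Real inner-product pairing between `t*` and `t` (identified via the inner product). -/
def pairing (x y : E) : ℝ := inner ℝ x y

/-- `F` is a face of `Δ`: it is cut out by a supporting linear functional.
(The improper face `Δ` itself is obtained with the zero functional.) -/
def IsFaceOf (F Δ : Set E) : Prop :=
  ∃ (ν : E) (c : ℝ), (∀ w ∈ Δ, c ≤ pairing ν w) ∧ F = {w ∈ Δ | pairing ν w = c}

/-- `v` is a vertex of `Δ`. -/
def IsVertexOf (v : E) (Δ : Set E) : Prop := IsFaceOf {v} Δ

/-- The segment from `v` to `v'` is an edge of `Δ`. -/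
def IsEdgeOf (v v' : E) (Δ : Set E) : Prop := v ≠ v' ∧ IsFaceOf (segment ℝ v v') Δ

/-- `F` is a facet (codimension-one face) of `Δ`. -/
def IsFacetOf (F Δ : Set E) : Prop :=
  IsFaceOf F Δ ∧ Module.finrank ℝ (vectorSpan ℝ F) + 1 = Module.finrank ℝ E

/-- `x` is a primitive vector of the lattice `L`. -/
def IsPrimitiveIn (L : Set E) (x : E) : Prop :=
  x ∈ L ∧ x ≠ 0 ∧ ∀ n : ℕ, 1 < n → (n : ℝ)⁻¹ • x ∉ L

/-- `α` lists the weights (primitive edge-direction vectors) of the vertex `v` of `Δ`: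
they are primitive, they form a `ℤ`-basis of the lattice `L`, and the edges of `Δ`
incident to `v` point in exactly these directions (Delzant/smoothness condition at `v`). -/
def HasWeights (L : Set E) (Δ : Set E) (v : E) {d : ℕ} (α : Fin d → E) : Prop :=
  (∀ j, IsPrimitiveIn L (α j)) ∧
  (∀ x, x ∈ L ↔ ∃ m : Fin d → ℤ, x = ∑ j, (m j : ℝ) • α j) ∧
  (∀ v', IsEdgeOf v v' Δ ↔ ∃ j, ∃ t : ℝ, 0 < t ∧ v' = v + t • α j)

/-- `Δ` is a Delzant (simple and smooth) polytope w.r.t. the lattice `L`, of dimension `d`: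
every vertex has a family of weights as above. -/
def IsDelzant (L : Set E) (d : ℕ) (Δ : Set E) : Prop :=
  ∀ v, IsVertexOf v Δ → ∃ α : Fin d → E, HasWeights L Δ v α

/-- `Δ` is a reflexive polytope w.r.t. the lattice `L`: all vertices are lattice points and
in its (minimal) facet representation all inward normals are primitive lattice vectors
with all constants equal to `-1`. -/
def IsReflexive (L : Set E) (Δ : Set E) : Prop :=
  (∀ v, IsVertexOf v Δ → v ∈ L) ∧
  ∃ (l : ℕ) (ν : Fin l → E), (∀ i, IsPrimitiveIn L (ν i)) ∧
    (Δ = ⋂ i, {w | -1 ≤ pairing (ν i) w}) ∧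
    (∀ i, IsFacetOf {w ∈ Δ | pairing (ν i) w = -1} Δ)

/-- The standard full-rank lattice `ℤ^d ⊂ ℝ^d`. -/
def stdLattice (d : ℕ) : Set (EuclideanSpace ℝ (Fin d)) := {x | ∀ i, ∃ n : ℤ, x i = n}

/-!
The first `d` weights lie in the direction space of the facet `F`, which they span by a
dimension count, so `⟨ν, αⱼ⟩ = 0` for `j < d`. Expanding the lattice point `v` in the lattice
basis `α` then gives `-1 = ⟨ν, v⟩ = c · ⟨ν, α_d⟩` with both factors integers, so
`⟨ν, α_d⟩ = ±1`. The sign comes from an edge at `v` leaving `F`: the functional `⟨ν, ·⟩`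
increases from `v` towards the interior point `0`, and a linear functional that increases
somewhere from a vertex of a polytope increases along an edge (as in the simplex method, push a
feasible direction to an extreme ray of the tangent cone without losing the increase). Such an
edge is `[v, v + t • α_d]` with far end a vertex, hence a lattice point, so
`t = ⟨ν, v + t • α_d⟩ + 1` is a positive integer.
-/

open Filter Topology Module

lemma pairing_add_right (x y z : E) : pairing x (y + z) = pairing x y + pairing x z :=
  inner_add_right _ _ _

lemma pairing_smul_right (x y : E) (t : ℝ) : pairing x (t • y) = t * pairing x y :=
  real_inner_smul_right _ _ _

lemma pairing_sub_right (x y z : E) : pairing x (y - z) = pairing x y - pairing x z :=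
  inner_sub_right _ _ _

lemma pairing_neg_right (x y : E) : pairing x (-y) = -pairing x y := inner_neg_right _ _

lemma pairing_zero_right (x : E) : pairing x 0 = 0 := inner_zero_right _

lemma pairing_sum_left {ι : Type*} (s : Finset ι) (f : ι → E) (x : E) :
    pairing (∑ i ∈ s, f i) x = ∑ i ∈ s, pairing (f i) x :=
  sum_inner _ _ _

lemma pairing_sum_right {ι : Type*} (s : Finset ι) (f : ι → ℝ) (g : ι → E) (x : E) :
    pairing x (∑ i ∈ s, f i • g i) = ∑ i ∈ s, f i * pairing x (g i) := by
  simp only [pairing, inner_sum, real_inner_smul_right]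

lemma isLinearMap_pairing (x : E) : IsLinearMap ℝ (pairing x) :=
  ⟨pairing_add_right x, fun c y => pairing_smul_right x y c⟩

lemma pairing_eq_zero_of_mem_vectorSpan {F : Set E} {ν : E} {c : ℝ}
    (hF : ∀ w ∈ F, pairing ν w = c) {x : E} (hx : x ∈ vectorSpan ℝ F) : pairing ν x = 0 := by
  have : vectorSpan ℝ F ≤ LinearMap.ker (isLinearMap_pairing ν).mk' := by
    rw [vectorSpan_def, Submodule.span_le]
    rintro _ ⟨w, hw, w', hw', rfl⟩
    simp [vsub_eq_sub, pairing_sub_right, hF w hw, hF w' hw']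
  exact this hx

lemma IsFaceOf.subset {B Δ : Set E} (h : IsFaceOf B Δ) : B ⊆ Δ := by
  obtain ⟨g, c, _, rfl⟩ := h
  exact sep_subset _ _

lemma IsFaceOf.isExtreme {B Δ : Set E} (h : IsFaceOf B Δ) : IsExtreme ℝ Δ B := by
  obtain ⟨g, c, hg, rfl⟩ := h
  refine ⟨sep_subset _ _, fun x₁ h₁ x₂ h₂ x ⟨_, hx⟩ ⟨a, b, ha, hb, hab, heq⟩ => ?_⟩
  have hsum : a * (pairing g x₁ - c) + b * (pairing g x₂ - c) = 0 := by
    rw [← heq, pairing_add_right, pairing_smul_right, pairing_smul_right] at hx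
    linear_combination hx - c * hab
  have h₁c := hg x₁ h₁
  have h₂c := hg x₂ h₂
  exact ⟨h₁, by nlinarith⟩

lemma IsVertexOf.mem_extremePoints {v : E} {Δ : Set E} (h : IsVertexOf v Δ) :
    v ∈ Δ.extremePoints ℝ :=
  isExtreme_singleton.mp h.isExtreme

lemma right_mem_extremePoints_segment {V : Type*} [AddCommGroup V] [Module ℝ V] {x y : V}
    (h : x ≠ y) : y ∈ (segment ℝ x y).extremePoints ℝ := by
  have hsdiff : segment ℝ x y \ {y} = AffineMap.lineMap x y '' Ico (0 : ℝ) 1 := by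
    rw [segment_eq_image_lineMap, ← Icc_sdiff_right, image_sdiff (AffineMap.lineMap_injective ℝ h),
      image_singleton, AffineMap.lineMap_apply_one]
  refine (convex_segment x y).mem_extremePoints_iff_convex_sdiff.2 ⟨right_mem_segment ℝ x y, ?_⟩
  rw [hsdiff]
  exact (convex_Ico 0 1).affine_image _

lemma IsEdgeOf.right_mem_extremePoints {v v' : E} {Δ : Set E} (h : IsEdgeOf v v' Δ) :
    v' ∈ Δ.extremePoints ℝ :=
  h.2.isExtreme.extremePoints_subset_extremePoints (right_mem_extremePoints_segment h.1)

lemma nonneg_of_add_smul_mem_of_mem_extremePoints {V : Type*} [AddCommGroup V] [Module ℝ V]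
    {A : Set V} {v u : V} (hv : v ∈ A.extremePoints ℝ) (hu : u ≠ 0) {s t : ℝ} (ht : 0 < t)
    (hs : v + s • u ∈ A) (htA : v + t • u ∈ A) : 0 ≤ s := by
  by_contra! hs0
  have hts : 0 < t - s := by linarith
  have hmem : v ∈ openSegment ℝ (v + s • u) (v + t • u) := by
    refine ⟨t / (t - s), -s / (t - s), by positivity, div_pos (neg_pos.2 hs0) hts, ?_, ?_⟩
    · field_simp; ring
    · match_scalars <;> field_simp <;> ring
  have hsu : s • u = 0 := by
    simpa using ((mem_extremePoints.1 hv).2 _ hs _ htA hmem).1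
  exact hu ((smul_eq_zero.1 hsu).resolve_left hs0.ne)

lemma IsCompact.exists_isGreatest_ray [FiniteDimensional ℝ E] {K : Set E} (hK : IsCompact K)
    {v u : E} (hv : v ∈ K) (hu : u ≠ 0) :
    ∃ t₀, IsGreatest {t : ℝ | 0 ≤ t ∧ v + t • u ∈ K} t₀ := by
  have hemb : IsClosedEmbedding fun t : ℝ => v + t • u :=
    (Homeomorph.addLeft v).isClosedEmbedding.comp (isClosedEmbedding_smul_left hu)
  have hcpt : IsCompact (Ici 0 ∩ (fun t : ℝ => v + t • u) ⁻¹' K) :=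
    (hemb.isCompact_preimage hK).inter_left isClosed_Ici
  exact hcpt.exists_isGreatest ⟨0, mem_Ici.2 le_rfl, by simpa using hv⟩

section Polyhedron

variable {ι : Type*} (g : ι → E) (b : ι → ℝ)

def polyhedron : Set E := ⋂ i, {w | b i ≤ pairing (g i) w}

variable {g b}

lemma mem_polyhedron {w : E} : w ∈ polyhedron g b ↔ ∀ i, b i ≤ pairing (g i) w :=
  mem_iInter

lemma convex_polyhedron : Convex ℝ (polyhedron g b) :=
  convex_iInter fun i => convex_halfSpace_ge (isLinearMap_pairing (g i)) (b i)

lemma isFaceOf_polyhedron_tight (S : Finset ι) :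
    IsFaceOf {w ∈ polyhedron g b | ∀ i ∈ S, pairing (g i) w = b i} (polyhedron g b) := by
  refine ⟨∑ i ∈ S, g i, ∑ i ∈ S, b i, fun w hw => ?_, ?_⟩
  · rw [pairing_sum_left]
    exact Finset.sum_le_sum fun i _ => mem_polyhedron.1 hw i
  · ext w
    simp only [mem_sep_iff, pairing_sum_left]
    refine and_congr_right fun hw => ?_
    rw [eq_comm, Finset.sum_eq_sum_iff_of_le fun i _ => mem_polyhedron.1 hw i]
    exact forall₂_congr fun _ _ => eq_comm

variable [Finite ι]

lemma exists_pos_add_smul_mem_polyhedron {p : E} (hp : p ∈ polyhedron g b) {z : E}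
    (hz : ∀ i, pairing (g i) p = b i → 0 ≤ pairing (g i) z) :
    ∃ ε : ℝ, 0 < ε ∧ p + ε • z ∈ polyhedron g b := by
  have hev : ∀ᶠ ε in 𝓝[>] (0 : ℝ), p + ε • z ∈ polyhedron g b := by
    simp only [mem_polyhedron, eventually_all, pairing_add_right, pairing_smul_right]
    intro i
    rcases (mem_polyhedron.1 hp i).eq_or_lt with h | h
    · filter_upwards [self_mem_nhdsWithin] with ε (hε : 0 < ε)
      nlinarith [hz i h.symm]
    · have hlim : Tendsto (fun ε : ℝ => pairing (g i) p + ε * pairing (g i) z) (𝓝[>] 0)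
          (𝓝 (pairing (g i) p)) := by
        have hcont : Continuous fun ε : ℝ => pairing (g i) p + ε * pairing (g i) z := by fun_prop
        exact (hcont.tendsto' 0 _ (by simp)).mono_left nhdsWithin_le_nhds
      exact (hlim.eventually_const_lt h).mono fun _ => le_of_lt
  obtain ⟨ε, hε, hεpos⟩ := (hev.and self_mem_nhdsWithin).exists
  exact ⟨ε, hεpos, hε⟩

lemma eq_of_tight_of_mem_extremePoints {p w : E} (hp : p ∈ (polyhedron g b).extremePoints ℝ)
    (hw : w ∈ polyhedron g b) (htight : ∀ i, pairing (g i) p = b i → pairing (g i) w = b i) :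
    w = p := by
  obtain ⟨ε, hε, hq⟩ := exists_pos_add_smul_mem_polyhedron hp.1 (z := p - w)
    fun i hi => by rw [pairing_sub_right, hi, htight i hi, sub_self]
  have hmem : p ∈ openSegment ℝ (p + ε • (p - w)) w := by
    refine ⟨1 / (1 + ε), ε / (1 + ε), by positivity, by positivity, by field_simp, ?_⟩
    match_scalars <;> field_simp
    ring
  exact ((mem_extremePoints.1 hp).2 _ hq _ hw hmem).2

lemma isVertexOf_of_mem_extremePoints {p : E} (hp : p ∈ (polyhedron g b).extremePoints ℝ) :
    IsVertexOf p (polyhedron g b) := by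
  set S := (toFinite {i | pairing (g i) p = b i}).toFinset
  have hp_eq : {p} = {w ∈ polyhedron g b | ∀ i ∈ S, pairing (g i) w = b i} := by
    ext w
    constructor
    · rintro rfl
      exact ⟨hp.1, fun i hi => by simpa [S] using hi⟩
    · rintro ⟨hw, hwS⟩
      exact eq_of_tight_of_mem_extremePoints hp hw fun i hi => hwS i (by simpa [S] using hi)
  rw [IsVertexOf, hp_eq]
  exact isFaceOf_polyhedron_tight S

lemma IsEdgeOf.isVertexOf_right {v v' : E} (h : IsEdgeOf v v' (polyhedron g b)) :
    IsVertexOf v' (polyhedron g b) :=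
  isVertexOf_of_mem_extremePoints h.right_mem_extremePoints

lemma eq_zero_of_forall_tight {v : E} (hv : v ∈ (polyhedron g b).extremePoints ℝ) {z : E}
    (hz : ∀ i, pairing (g i) v = b i → pairing (g i) z = 0) : z = 0 := by
  obtain ⟨ε, hε, hq⟩ := exists_pos_add_smul_mem_polyhedron hv.1 fun i hi => (hz i hi).ge
  have hεz : v + ε • z = v := eq_of_tight_of_mem_extremePoints hv hq fun i hi => by
    rw [pairing_add_right, pairing_smul_right, hi, hz i hi, mul_zero, add_zero]
  exact (smul_eq_zero.1 (by simpa using hεz)).resolve_left hε.ne'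

end Polyhedron

section TightSubspace

variable {ι : Type*} (g : ι → E)

def tightSubspace (u : E) : Submodule ℝ E where
  carrier := {w | ∀ i, pairing (g i) u = 0 → pairing (g i) w = 0}
  zero_mem' := fun _ _ => pairing_zero_right _
  add_mem' := fun hx hy i hi => by rw [pairing_add_right, hx i hi, hy i hi, add_zero]
  smul_mem' := fun c _ hx i hi => by rw [pairing_smul_right, hx i hi, mul_zero]

lemma mem_tightSubspace_self (u : E) : u ∈ tightSubspace g u := fun _ h => h

variable {g} [Finite ι]

lemma exists_add_smul_tightSubspace_lt {u z : E} (hu : ∀ i, 0 ≤ pairing (g i) u)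
    (hz : z ∈ tightSubspace g u) {i₀ : ι} (hi₀ : pairing (g i₀) z < 0) :
    ∃ t : ℝ, (∀ i, 0 ≤ pairing (g i) (u + t • z)) ∧
      tightSubspace g (u + t • z) < tightSubspace g u := by
  -- ratio test: stop at the first constraint that becomes tight
  obtain ⟨m, hm, hmin⟩ := exists_min_image {i | pairing (g i) z < 0}
    (fun i => pairing (g i) u / -pairing (g i) z) (toFinite _) ⟨i₀, hi₀⟩
  set t := pairing (g m) u / -pairing (g m) z
  have hm : pairing (g m) z < 0 := hm
  have ht : 0 ≤ t := div_nonneg (hu m) (by linarith)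
  have hval : ∀ i, pairing (g i) (u + t • z) = pairing (g i) u + t * pairing (g i) z :=
    fun i => by rw [pairing_add_right, pairing_smul_right]
  refine ⟨t, fun i => ?_, lt_of_le_of_ne (fun w hw i hi => hw i ?_) fun heq => ?_⟩
  · rw [hval]
    by_cases hi : pairing (g i) z < 0
    · have := (le_div_iff₀ (neg_pos.2 hi)).1 (hmin i hi)
      linarith
    · exact add_nonneg (hu i) (mul_nonneg ht (not_lt.1 hi))
  · rw [hval, hi, hz i hi, mul_zero, add_zero]
  · have htight : pairing (g m) (u + t • z) = 0 := by
      rw [hval, div_mul_eq_mul_div, div_neg, mul_div_cancel_right₀ _ hm.ne, add_neg_cancel]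
    exact hm.ne ((heq ▸ hz) m htight)

lemma exists_tightSubspace_le_span [FiniteDimensional ℝ E] (ν : E)
    (hpointed : ∀ z, (∀ i, pairing (g i) z = 0) → z = 0) {u : E}
    (hu : ∀ i, 0 ≤ pairing (g i) u) (hνu : 0 < pairing ν u) :
    ∃ u', (∀ i, 0 ≤ pairing (g i) u') ∧ 0 < pairing ν u' ∧ tightSubspace g u' ≤ ℝ ∙ u' := by
  induction hn : finrank ℝ (tightSubspace g u) using Nat.strong_induction_on generalizing u with
  | _ n ih =>
  -- A direction of the tight subspace killed by `ν` and seen negatively by some constraint lets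
  -- the ratio test tighten one more constraint without changing `⟨ν, u⟩`.
  by_cases hle : tightSubspace g u ≤ ℝ ∙ u
  · exact ⟨u, hu, hνu, hle⟩
  obtain ⟨w, hw, hwu⟩ := SetLike.not_le_iff_exists.1 hle
  set w' := w - (pairing ν w / pairing ν u) • u
  have hw' : w' ∈ tightSubspace g u :=
    sub_mem hw (Submodule.smul_mem _ _ (mem_tightSubspace_self g u))
  have hw'ν : pairing ν w' = 0 := by
    rw [pairing_sub_right, pairing_smul_right]
    field_simp
    ring
  have hw'0 : w' ≠ 0 := fun h => hwu <| by
    rw [sub_eq_zero.1 h]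
    exact Submodule.smul_mem _ _ (Submodule.mem_span_singleton_self u)
  obtain ⟨i₀, hi₀⟩ : ∃ i, pairing (g i) w' ≠ 0 := by
    by_contra! h
    exact hw'0 (hpointed w' h)
  obtain ⟨z, hz, hzν, hi₀z⟩ : ∃ z ∈ tightSubspace g u, pairing ν z = 0 ∧ pairing (g i₀) z < 0 := by
    rcases hi₀.lt_or_gt with h | h
    · exact ⟨w', hw', hw'ν, h⟩
    · exact ⟨-w', neg_mem hw', by rw [pairing_neg_right, hw'ν, neg_zero],
        by rw [pairing_neg_right]; linarith⟩
  obtain ⟨t, hut, hlt⟩ := exists_add_smul_tightSubspace_lt hu hz hi₀z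
  exact ih _ (hn ▸ Submodule.finrank_lt_finrank_of_lt hlt) hut
    (by rwa [pairing_add_right, pairing_smul_right, hzν, mul_zero, add_zero]) rfl

end TightSubspace

section Edges

variable {ι : Type*} [Finite ι] {g : ι → E} {b : ι → ℝ}

lemma isEdgeOf_add_smul_of_isGreatest {v u : E} (hv : v ∈ (polyhedron g b).extremePoints ℝ)
    (hu : u ≠ 0) (hray : tightSubspace (fun i : {i // pairing (g i) v = b i} => g i) u ≤ ℝ ∙ u)
    {t₀ : ℝ} (ht₀ : 0 < t₀)
    (hmax : IsGreatest {t : ℝ | 0 ≤ t ∧ v + t • u ∈ polyhedron g b} t₀) :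
    IsEdgeOf v (v + t₀ • u) (polyhedron g b) := by
  refine ⟨fun h => hu ((smul_eq_zero.1 (by simpa using h.symm)).resolve_left ht₀.ne'), ?_⟩
  -- the edge is cut out by the constraints tight at `v` that stay tight along `u`
  set Z := (toFinite {i | pairing (g i) v = b i ∧ pairing (g i) u = 0}).toFinset
  suffices segment ℝ v (v + t₀ • u) = {x ∈ polyhedron g b | ∀ i ∈ Z, pairing (g i) x = b i} from
    this ▸ isFaceOf_polyhedron_tight Z
  ext x
  constructor
  · intro hx
    refine ⟨convex_polyhedron.segment_subset hv.1 hmax.1.2 hx, fun i hi => ?_⟩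
    obtain ⟨hiv, hiu⟩ : pairing (g i) v = b i ∧ pairing (g i) u = 0 := by simpa [Z] using hi
    rw [segment_eq_image'] at hx
    obtain ⟨θ, -, rfl⟩ := hx
    simp [pairing_add_right, pairing_smul_right, hiv, hiu]
  · rintro ⟨hxP, hxZ⟩
    have hxv : x - v ∈ ℝ ∙ u := hray fun i hi => by
      rw [pairing_sub_right, hxZ i (by simpa [Z] using ⟨i.2, hi⟩), i.2, sub_self]
    obtain ⟨s, hs⟩ := Submodule.mem_span_singleton.1 hxv
    obtain rfl : x = v + s • u := by rw [hs, add_sub_cancel]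
    have hs0 := nonneg_of_add_smul_mem_of_mem_extremePoints hv hu ht₀ hxP hmax.1.2
    have hst : s ≤ t₀ := hmax.2 ⟨hs0, hxP⟩
    rw [segment_eq_image']
    refine ⟨s / t₀, ⟨by positivity, div_le_one_of_le₀ hst ht₀.le⟩, ?_⟩
    simp [smul_smul, div_mul_cancel₀ _ ht₀.ne']

theorem exists_isEdgeOf_pairing_lt [FiniteDimensional ℝ E] (hP : IsCompact (polyhedron g b))
    {v w : E} (hv : IsVertexOf v (polyhedron g b)) (hw : w ∈ polyhedron g b) {ν : E}
    (hvw : pairing ν v < pairing ν w) :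
    ∃ v', IsEdgeOf v v' (polyhedron g b) ∧ pairing ν v < pairing ν v' := by
  have hvext := hv.mem_extremePoints
  obtain ⟨u, hu, hνu, hray⟩ :=
    exists_tightSubspace_le_span (g := fun i : {i // pairing (g i) v = b i} => g i) ν
      (fun z hz => eq_zero_of_forall_tight hvext fun i hi => hz ⟨i, hi⟩) (u := w - v)
      (fun i => by rw [pairing_sub_right, i.2, sub_nonneg]; exact mem_polyhedron.1 hw i)
      (by rwa [pairing_sub_right, sub_pos])
  have hu0 : u ≠ 0 := by
    rintro rfl
    rw [pairing_zero_right] at hνu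
    exact lt_irrefl _ hνu
  obtain ⟨t₀, hmax⟩ := hP.exists_isGreatest_ray hvext.1 hu0
  obtain ⟨ε, hε, hεP⟩ := exists_pos_add_smul_mem_polyhedron hvext.1 fun i hi => hu ⟨i, hi⟩
  have ht₀ : 0 < t₀ := hε.trans_le (hmax.2 ⟨hε.le, hεP⟩)
  refine ⟨v + t₀ • u, isEdgeOf_add_smul_of_isGreatest hvext hu0 hray ht₀ hmax, ?_⟩
  rw [pairing_add_right, pairing_smul_right]
  linarith [mul_pos ht₀ hνu]

end Edges

lemma pairing_weight_castSucc_eq_zero {n : ℕ} {F : Set E} {ν v : E} {c : ℝ}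
    (hF : ∀ w ∈ F, pairing ν w = c) (hdim : finrank ℝ (vectorSpan ℝ F) = n)
    (α : Fin (n + 1) → E)
    (horder : ∀ w ∈ F, ∃ t : Fin (n + 1) → ℝ, t (Fin.last n) = 0 ∧ w = v + ∑ j, t j • α j)
    (j : Fin n) : pairing ν (α j.castSucc) = 0 := by
  have hle : vectorSpan ℝ F ≤ Submodule.span ℝ (range fun j : Fin n => α j.castSucc) := by
    rw [vectorSpan_def, Submodule.span_le]
    rintro _ ⟨w, hw, w', hw', rfl⟩
    obtain ⟨t, ht, rfl⟩ := horder w hw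
    obtain ⟨t', ht', rfl⟩ := horder w' hw'
    dsimp only
    rw [vsub_eq_sub, add_sub_add_left_eq_sub, ← Finset.sum_sub_distrib]
    simp_rw [← sub_smul]
    rw [Fin.sum_univ_castSucc, ht, ht', sub_self, zero_smul, add_zero]
    exact Submodule.sum_mem _ fun i _ => Submodule.smul_mem _ _ (Submodule.subset_span ⟨i, rfl⟩)
  have : FiniteDimensional ℝ (Submodule.span ℝ (range fun j : Fin n => α j.castSucc)) :=
    .span_of_finite ℝ (finite_range _)
  have heq := Submodule.eq_of_le_of_finrank_le hle <| by
    simpa [Set.finrank, hdim] using finrank_range_le_card (R := ℝ) fun j : Fin n => α j.castSucc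
  exact pairing_eq_zero_of_mem_vectorSpan hF (heq ▸ Submodule.subset_span ⟨j, rfl⟩)

lemma exists_int_eq_pairing_of_mem_stdLattice {n : ℕ} {x y : EuclideanSpace ℝ (Fin n)}
    (hx : x ∈ stdLattice n) (hy : y ∈ stdLattice n) : ∃ m : ℤ, pairing x y = m := by
  choose a ha using hx
  choose b hb using hy
  refine ⟨∑ i, a i * b i, ?_⟩
  simp [pairing, PiLp.inner_apply, ha, hb, mul_comm]

section ReflexiveVertex

variable {ι : Type*} [Finite ι] {g : ι → E} {b : ι → ℝ} {L : Set E} {n : ℕ}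
  {α : Fin (n + 1) → E} {ν v : E}

lemma eq_of_pairing_add_smul_ne {κ : Type*} {β : κ → E} {i j : κ} {t : ℝ}
    (hperp : ∀ j ≠ i, pairing ν (β j) = 0) (h : pairing ν (v + t • β j) ≠ pairing ν v) : j = i := by
  by_contra hj
  rw [pairing_add_right, pairing_smul_right, hperp j hj, mul_zero, add_zero] at h
  exact h rfl

lemma pairing_last_weight_eq_one [FiniteDimensional ℝ E]
    (hP : IsCompact (polyhedron g fun _ => -1)) (hv : IsVertexOf v (polyhedron g fun _ => -1))
    (hνL : ∀ x ∈ L, ∃ m : ℤ, pairing ν x = m) (hαL : α (Fin.last n) ∈ L)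
    (hvα : ∃ c : Fin (n + 1) → ℤ, v = ∑ j, (c j : ℝ) • α j)
    (hαedge : ∀ v', IsEdgeOf v v' (polyhedron g fun _ => -1) →
      ∃ j, ∃ t : ℝ, 0 < t ∧ v' = v + t • α j)
    (hvν : pairing ν v = -1) (hperp : ∀ j ≠ Fin.last n, pairing ν (α j) = 0) :
    pairing ν (α (Fin.last n)) = 1 := by
  obtain ⟨k, hk⟩ := hνL _ hαL
  obtain ⟨c, hc⟩ := hvα
  have hck : c (Fin.last n) * k = -1 := by
    have : (c (Fin.last n) : ℝ) * k = -1 := by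
      rw [← hk, ← hvν, hc, pairing_sum_right, Finset.sum_eq_single (Fin.last n)
        (fun j _ hj => by rw [hperp j hj, mul_zero]) (by simp)]
    exact_mod_cast this
  -- `0` lies in the polytope strictly above the facet, so some edge at `v` climbs off it
  obtain ⟨v', hedge, hlt⟩ := exists_isEdgeOf_pairing_lt hP hv (w := 0)
    (mem_polyhedron.2 fun i => by rw [pairing_zero_right]; norm_num)
    (by rw [hvν, pairing_zero_right]; norm_num)
  obtain ⟨j, t, ht, rfl⟩ := hαedge v' hedge
  obtain rfl := eq_of_pairing_add_smul_ne hperp hlt.ne'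
  rw [pairing_add_right, pairing_smul_right, lt_add_iff_pos_right, hk] at hlt
  have hkpos : 0 < k := by exact_mod_cast pos_of_mul_pos_right hlt ht.le
  rw [hk, Int.eq_one_of_dvd_one hkpos.le ⟨-c (Fin.last n), by linarith⟩, Int.cast_one]

lemma exists_nat_eq_add_smul_last_weight (hvertL : ∀ p, IsVertexOf p (polyhedron g b) → p ∈ L)
    (hνL : ∀ x ∈ L, ∃ m : ℤ, pairing ν x = m)
    (hαedge : ∀ v', IsEdgeOf v v' (polyhedron g b) → ∃ j, ∃ t : ℝ, 0 < t ∧ v' = v + t • α j)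
    (hvν : pairing ν v = -1) (hperp : ∀ j ≠ Fin.last n, pairing ν (α j) = 0)
    (hk : pairing ν (α (Fin.last n)) = 1) {v' : E} (hedge : IsEdgeOf v v' (polyhedron g b))
    (hv' : pairing ν v' ≠ -1) :
    ∃ N : ℕ, 0 < N ∧ v' = v + (N : ℝ) • α (Fin.last n) := by
  obtain ⟨j, t, ht, rfl⟩ := hαedge v' hedge
  obtain rfl := eq_of_pairing_add_smul_ne hperp (hvν ▸ hv')
  obtain ⟨m, hm⟩ := hνL _ (hvertL _ hedge.isVertexOf_right)
  rw [pairing_add_right, pairing_smul_right, hvν, hk, mul_one] at hm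
  have hm1 : 0 < m + 1 := by exact_mod_cast (by linarith : (0 : ℝ) < m + 1)
  refine ⟨(m + 1).toNat, by omega, ?_⟩
  rw [show ((m + 1).toNat : ℝ) = t by
    rw [← Int.cast_natCast, Int.toNat_of_nonneg hm1.le]; push_cast; linarith]

end ReflexiveVertex

theorem stmt2_general (d : ℕ) (Δ : Set (EuclideanSpace ℝ (Fin (d + 1))))
    (hcomp : IsCompact Δ)
    (hrefl : IsReflexive (stdLattice (d + 1)) Δ)
    (ν : EuclideanSpace ℝ (Fin (d + 1))) (hν : IsPrimitiveIn (stdLattice (d + 1)) ν)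
    (F : Set (EuclideanSpace ℝ (Fin (d + 1))))
    (hF : F = {w ∈ Δ | pairing ν w = -1})
    (hFacet : IsFacetOf F Δ)
    (v : EuclideanSpace ℝ (Fin (d + 1))) (hv : IsVertexOf v Δ) (hvF : v ∈ F)
    (α : Fin (d + 1) → EuclideanSpace ℝ (Fin (d + 1)))
    (hα : HasWeights (stdLattice (d + 1)) Δ v α)
    (horder : ∀ w ∈ F, ∃ t : Fin (d + 1) → ℝ,
      (∀ j, 0 ≤ t j) ∧ t (Fin.last d) = 0 ∧ w = v + ∑ j, t j • α j) :
    pairing ν (α (Fin.last d)) = 1 ∧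
      ∀ v', IsEdgeOf v v' Δ → ¬ (segment ℝ v v' ⊆ F) →
        ∃ tmax : ℕ, 0 < tmax ∧ v' = v + (tmax : ℝ) • α (Fin.last d) := by
  obtain ⟨hαprim, hαlat, hαedge⟩ := hα
  obtain ⟨hvertL, l, νs, -, hΔ, -⟩ := hrefl
  change Δ = polyhedron νs fun _ => -1 at hΔ
  subst hΔ
  have hFν : ∀ w ∈ F, pairing ν w = -1 := fun w hw => by rw [hF] at hw; exact hw.2
  have hvν := hFν v hvF
  have hνL := fun x (hx : x ∈ stdLattice (d + 1)) =>
    exists_int_eq_pairing_of_mem_stdLattice hν.1 hx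
  have hperp : ∀ j ≠ Fin.last d, pairing ν (α j) = 0 := by
    intro j hj
    obtain ⟨j, rfl⟩ := Fin.exists_castSucc_eq.2 hj
    refine pairing_weight_castSucc_eq_zero (v := v) hFν ?_ α (fun w hw => ?_) j
    · have := hFacet.2
      rw [finrank_euclideanSpace_fin] at this
      omega
    · obtain ⟨t, -, ht, hw⟩ := horder w hw
      exact ⟨t, ht, hw⟩
  have hk := pairing_last_weight_eq_one hcomp hv hνL (hαprim _).1 ((hαlat v).1 (hvertL v hv))
    (fun v' h => (hαedge v').1 h) hvν hperp
  refine ⟨hk, fun v' hedge hnot => exists_nat_eq_add_smul_last_weight hvertL hνL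
    (fun v' h => (hαedge v').1 h) hvν hperp hk hedge fun hv'ν => hnot fun x hx => ?_⟩
  rw [hF]
  exact ⟨hedge.2.subset hx,
    (convex_hyperplane (isLinearMap_pairing ν) (-1)).segment_subset hvν hv'ν hx⟩

/-- Let `Δ` be a full-dimensional reflexive Delzant polytope in
`t* = ℝ^(d+1)`, `F` a facet of `Δ` supported on `{w | ⟨w,ν⟩ = -1}` with primitive inward
normal `ν`, `v` a vertex of `Δ` lying in `F`, and `α 0, …, α d` the weights of `v` ordered
so that `F ⊆ v + ℝ≥0⟨α 0,…,α (d-1)⟩`.  Then `⟨α d, ν⟩ = 1`; moreover for any edge of `Δ`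
incident to `v` and not contained in `F`, its other endpoint is `v + t_max • α d` for some
positive integer `t_max`. -/
theorem stmt2 (d : ℕ) (Δ : Set (EuclideanSpace ℝ (Fin (d + 1))))
    (hconv : Convex ℝ Δ) (hcomp : IsCompact Δ) (hfull : (interior Δ).Nonempty)
    (hrefl : IsReflexive (stdLattice (d + 1)) Δ)
    (hdelz : IsDelzant (stdLattice (d + 1)) (d + 1) Δ)
    (ν : EuclideanSpace ℝ (Fin (d + 1))) (hν : IsPrimitiveIn (stdLattice (d + 1)) ν)
    (F : Set (EuclideanSpace ℝ (Fin (d + 1))))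
    (hF : F = {w ∈ Δ | pairing ν w = -1})
    (hFacet : IsFacetOf F Δ)
    (hhalf : ∀ w ∈ Δ, -1 ≤ pairing ν w)
    (v : EuclideanSpace ℝ (Fin (d + 1))) (hv : IsVertexOf v Δ) (hvF : v ∈ F)
    (α : Fin (d + 1) → EuclideanSpace ℝ (Fin (d + 1)))
    (hα : HasWeights (stdLattice (d + 1)) Δ v α)
    (horder : ∀ w ∈ F, ∃ t : Fin (d + 1) → ℝ,
      (∀ j, 0 ≤ t j) ∧ t (Fin.last d) = 0 ∧ w = v + ∑ j, t j • α j) :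
    pairing ν (α (Fin.last d)) = 1 ∧
      ∀ v', IsEdgeOf v v' Δ → ¬ (segment ℝ v v' ⊆ F) →
        ∃ tmax : ℕ, 0 < tmax ∧ v' = v + (tmax : ℝ) • α (Fin.last d) :=
  stmt2_general d Δ hcomp hrefl ν hν F hF hFacet v hv hvF α hα horder
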